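/- For a three-times continuously differentiable f with bounded third derivatives, the bias of the SPSA estimator ĝ_j(x) = (f(x+cΔ) − f(x−cΔ))/(2cΔ_j) with Rademacher Δ satisfies |E[ĝ_j(x)] − ∂f(x)/∂x_j| = O(c²) as c → 0. -/

import Mathlib

open MeasureTheory ProbabilityTheory

section Helpers

variable {E : Type*} [NormedAddCommGroup E] [NormedSpace ℝ E]

theorem spsa_norm_fderiv_eq_one {F : Type*} [NormedAddCommGroup F] [NormedSpace ℝ F]
    {g : E → F} {y : E} :
    ‖fderiv ℝ g y‖ = ‖iteratedFDeriv ℝ 1 g y‖ := by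
  rw [← norm_fderiv_iteratedFDeriv, iteratedFDeriv_zero_eq_comp,
    LinearIsometryEquiv.comp_fderiv]
  exact ContinuousLinearMap.opNorm_ext _ _ (fun v => by simp)

theorem spsa_taylor_sym {f : E → ℝ} (hf : ContDiff ℝ 3 f) {M : ℝ}
    (hM : ∀ y, ‖iteratedFDeriv ℝ 3 f y‖ ≤ M) (x h : E) :
    |f (x + h) - f (x - h) - 2 * fderiv ℝ f x h| ≤ 2 * M * ‖h‖ ^ 3 := by
  have hM0 : 0 ≤ M := le_trans (norm_nonneg _) (hM x)
  set D1 := fderiv ℝ f with hD1def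
  set D2 : E → E →L[ℝ] E →L[ℝ] ℝ := fderiv ℝ D1 with hD2def
  have hD1 : ContDiff ℝ 2 D1 := hf.fderiv_right (by norm_num)
  have hD2 : ContDiff ℝ 1 D2 := hD1.fderiv_right (by norm_num)
  have hfd : Differentiable ℝ f := hf.differentiable (by norm_num)
  have hD1d : Differentiable ℝ D1 := hD1.differentiable (by norm_num)
  have hD2d : Differentiable ℝ D2 := hD2.differentiable (by norm_num)
  have lipD2 : ∀ y z : E, ‖D2 y - D2 z‖ ≤ M * ‖y - z‖ := by
    intro y z
    refine convex_univ.norm_image_sub_le_of_norm_fderiv_le (𝕜 := ℝ) (f := D2)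
      (fun w _ => by exact hD2d w) (fun w _ => ?_) trivial trivial
    calc _ = ‖iteratedFDeriv ℝ 3 f w‖ := by
          rw [spsa_norm_fderiv_eq_one, hD2def, hD1def, norm_iteratedFDeriv_fderiv,
            norm_iteratedFDeriv_fderiv]
      _ ≤ M := hM w
  have stepB : ∀ k : E, ‖D1 (x + k) - D1 x - D2 x k‖ ≤ M * ‖k‖ ^ 2 := by
    intro k
    have key : ∀ w ∈ Metric.closedBall (0 : E) ‖k‖,
        HasFDerivWithinAt (fun w => D1 (x + w) - D2 x w)
          (D2 (x + w) - D2 x) (Metric.closedBall (0 : E) ‖k‖) w := by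
      intro w _
      have h1 : HasFDerivAt (fun w : E => D1 (x + w)) (D2 (x + w)) w := by
        have := ((hD1d (x + w)).hasFDerivAt).comp w
          ((hasFDerivAt_id w).const_add x)
        simp at this; exact this
      exact ((h1.sub ((D2 x).hasFDerivAt)).hasFDerivWithinAt)
    have bound : ∀ w ∈ Metric.closedBall (0 : E) ‖k‖,
        ‖D2 (x + w) - D2 x‖ ≤ M * ‖k‖ := by
      intro w hw
      calc ‖D2 (x + w) - D2 x‖ ≤ M * ‖x + w - x‖ := lipD2 _ _
        _ = M * ‖w‖ := by ring_nf; rw [add_sub_cancel_left]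
        _ ≤ M * ‖k‖ := by
            apply mul_le_mul_of_nonneg_left _ hM0
            simpa using hw
    have h2 := (convex_closedBall (0 : E) ‖k‖).norm_image_sub_le_of_norm_hasFDerivWithin_le
      key bound (Metric.mem_closedBall_self (norm_nonneg k))
      (by simp : k ∈ Metric.closedBall (0 : E) ‖k‖)
    rw [sub_right_comm]
    simpa [pow_two, mul_comm, mul_assoc, mul_left_comm] using h2
  have keyC : ∀ w ∈ Metric.closedBall (0 : E) ‖h‖,
      HasFDerivWithinAt (fun w => f (x + w) - f (x - w) - 2 * D1 x w)
        (D1 (x + w) + D1 (x - w) - (2:ℝ) • D1 x) (Metric.closedBall (0 : E) ‖h‖) w := by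
    intro w _
    have h1 : HasFDerivAt (fun w : E => f (x + w)) (D1 (x + w)) w := by
      have := ((hfd (x + w)).hasFDerivAt).comp w ((hasFDerivAt_id w).const_add x)
      simp at this; exact this
    have h2 : HasFDerivAt (fun w : E => f (x - w)) (-(D1 (x - w))) w := by
      have := ((hfd (x - w)).hasFDerivAt).comp w ((hasFDerivAt_id w).const_sub x)
      simp at this; exact this
    have h3 : HasFDerivAt (fun w : E => 2 * D1 x w) ((2:ℝ) • D1 x) w := by
      exact ((D1 x).hasFDerivAt (x := w)).const_smul (2:ℝ)
    have := (h1.sub h2).sub h3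
    have heq : D1 (x + w) - -(D1 (x - w)) - (2:ℝ) • D1 x
        = D1 (x + w) + D1 (x - w) - (2:ℝ) • D1 x := by abel
    rw [heq] at this
    exact this.hasFDerivWithinAt
  have boundC : ∀ w ∈ Metric.closedBall (0 : E) ‖h‖,
      ‖D1 (x + w) + D1 (x - w) - (2:ℝ) • D1 x‖ ≤ 2 * M * ‖h‖ ^ 2 := by
    intro w hw
    have hwle : ‖w‖ ≤ ‖h‖ := by simpa using hw
    have e1 := stepB w
    have e2 := stepB (-w)
    have heq : D1 (x + w) + D1 (x - w) - (2:ℝ) • D1 x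
        = (D1 (x + w) - D1 x - D2 x w) + (D1 (x + -w) - D1 x - D2 x (-w)) := by
      rw [map_neg, two_smul, sub_neg_eq_add]
      abel
    rw [heq]
    calc ‖(D1 (x + w) - D1 x - D2 x w) + (D1 (x + -w) - D1 x - D2 x (-w))‖
        ≤ ‖D1 (x + w) - D1 x - D2 x w‖ + ‖D1 (x + -w) - D1 x - D2 x (-w)‖ :=
          norm_add_le _ _
      _ ≤ M * ‖w‖ ^ 2 + M * ‖(-w)‖ ^ 2 := add_le_add e1 e2
      _ = 2 * M * ‖w‖ ^ 2 := by rw [norm_neg]; ring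
      _ ≤ 2 * M * ‖h‖ ^ 2 := by
          apply mul_le_mul_of_nonneg_left _ (by positivity)
          exact pow_le_pow_left₀ (norm_nonneg _) hwle 2
  have hC := (convex_closedBall (0 : E) ‖h‖).norm_image_sub_le_of_norm_hasFDerivWithin_le
    keyC boundC (Metric.mem_closedBall_self (norm_nonneg h))
    (by simp : h ∈ Metric.closedBall (0 : E) ‖h‖)
  have : |f (x + h) - f (x - h) - 2 * D1 x h| ≤ 2 * M * ‖h‖ ^ 2 * ‖h‖ := by
    simpa [Real.norm_eq_abs] using hC
  calc |f (x + h) - f (x - h) - 2 * D1 x h| ≤ 2 * M * ‖h‖ ^ 2 * ‖h‖ := this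
    _ = 2 * M * ‖h‖ ^ 3 := by ring

theorem spsa_clm_apply_eq_sum {d : ℕ} (g : (Fin d → ℝ) →L[ℝ] ℝ) (v : Fin d → ℝ) :
    g v = ∑ i, v i * g (Pi.single i 1) := by
  have hv : v = ∑ i, v i • (Pi.single i (1:ℝ) : Fin d → ℝ) := by
    ext k
    simp [Pi.single_apply]
  conv_lhs => rw [hv]
  rw [map_sum]
  simp [smul_eq_mul]

end Helpers

/-- The bias of the SPSA gradient estimator is `O(c²)` as `c → 0` for
`f ∈ C³` with bounded third derivatives. -/
theorem stmt_8 {d : ℕ} {Ω : Type*} [MeasurableSpace Ω]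
    (P : Measure Ω) [IsProbabilityMeasure P]
    (f : (Fin d → ℝ) → ℝ) (hf : ContDiff ℝ 3 f)
    (M : ℝ) (hM : ∀ y : Fin d → ℝ, ‖iteratedFDeriv ℝ 3 f y‖ ≤ M)
    (Δ : Ω → Fin d → ℝ)
    (hΔmeas : ∀ i, Measurable (fun ω => Δ ω i))
    (hΔindep : iIndepFun (fun i ω => Δ ω i) P)
    (hΔplus : ∀ i, P {ω | Δ ω i = 1} = 1 / 2)
    (hΔminus : ∀ i, P {ω | Δ ω i = -1} = 1 / 2)
    (x : Fin d → ℝ) (j : Fin d) :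
    ∃ C : ℝ, 0 < C ∧ ∃ c₀ : ℝ, 0 < c₀ ∧ ∀ c : ℝ, 0 < c → c ≤ c₀ →
      |(∫ ω, (f (x + c • Δ ω) - f (x - c • Δ ω)) / (2 * c * Δ ω j) ∂P) -
          fderiv ℝ f x (Pi.single j 1)| ≤ C * c ^ 2 := by
  have hM0 : 0 ≤ M := le_trans (norm_nonneg _) (hM x)
  -- a.e. every coordinate is ±1
  have hae : ∀ᵐ ω ∂P, ∀ i, Δ ω i = 1 ∨ Δ ω i = -1 := by
    rw [ae_all_iff]
    intro i
    have hA : MeasurableSet {ω | Δ ω i = 1} := (hΔmeas i) (measurableSet_singleton 1)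
    have hB : MeasurableSet {ω | Δ ω i = -1} := (hΔmeas i) (measurableSet_singleton (-1))
    have hdisj : Disjoint {ω | Δ ω i = 1} {ω | Δ ω i = -1} := by
      rw [Set.disjoint_left]
      intro ω h1 h2
      simp only [Set.mem_setOf_eq] at h1 h2
      rw [h1] at h2; norm_num at h2
    have hunion : P ({ω | Δ ω i = 1} ∪ {ω | Δ ω i = -1}) = 1 := by
      rw [measure_union hdisj hB, hΔplus i, hΔminus i, ENNReal.div_add_div_same]
      norm_num
      exact ENNReal.div_self (by norm_num) (by norm_num)
    refine (ae_iff).mpr ?_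
    have hcompl : {ω | ¬(Δ ω i = 1 ∨ Δ ω i = -1)}
        = ({ω | Δ ω i = 1} ∪ {ω | Δ ω i = -1})ᶜ := by
      ext ω; simp [not_or]
    rw [hcompl]
    exact prob_compl_eq_zero_iff (hA.union hB) |>.mpr hunion
  -- a.e. norm of Δ is 1
  have hnorm : ∀ᵐ ω ∂P, ‖Δ ω‖ = 1 := by
    filter_upwards [hae] with ω hω
    have hle : ‖Δ ω‖ ≤ 1 := by
      apply pi_norm_le_iff_of_nonneg zero_le_one |>.mpr
      intro i
      rcases hω i with h | h <;> simp [h]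
    have hge : (1:ℝ) ≤ ‖Δ ω‖ := by
      have := norm_le_pi_norm (Δ ω) j
      rcases hω j with h | h <;> simp [h] at this <;> linarith
    linarith
  set g : (Fin d → ℝ) →L[ℝ] ℝ := fderiv ℝ f x with hg
  set ψ : Ω → ℝ := fun ω => g (Δ ω) * Δ ω j with hψ
  have hΔmeas' : Measurable Δ := measurable_pi_lambda _ hΔmeas
  have hψmeas : Measurable ψ :=
    ((map_continuous g).measurable.comp hΔmeas').mul (hΔmeas j)
  have hψint : Integrable ψ P := by
    refine Integrable.mono' (integrable_const ‖g‖) hψmeas.aestronglyMeasurable ?_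
    filter_upwards [hnorm, hae] with ω h1 h2
    rw [Real.norm_eq_abs, hψ, abs_mul]
    have h3 : |Δ ω j| = 1 := by rcases h2 j with h | h <;> simp [h]
    rw [h3, mul_one]
    calc |g (Δ ω)| ≤ ‖g‖ * ‖Δ ω‖ := g.le_opNorm _
      _ = ‖g‖ := by rw [h1, mul_one]
  -- each coordinate integrable
  have hint : ∀ i, Integrable (fun ω => Δ ω i) P := by
    intro i
    refine Integrable.mono' (integrable_const 1) (hΔmeas i).aestronglyMeasurable ?_
    filter_upwards [hae] with ω hω
    rcases hω i with h | h <;> simp [h]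
  have hintmul : ∀ i, Integrable (fun ω => Δ ω i * Δ ω j) P := by
    intro i
    refine Integrable.mono' (integrable_const 1) ((hΔmeas i).mul (hΔmeas j)).aestronglyMeasurable ?_
    filter_upwards [hae] with ω hω
    rcases hω i with h | h <;> rcases hω j with h' | h' <;> simp [h, h']
  -- expectation of each coordinate is 0
  have hexp : ∀ i, (∫ ω, Δ ω i ∂P) = 0 := by
    intro i
    have hA : MeasurableSet {ω | Δ ω i = 1} := (hΔmeas i) (measurableSet_singleton 1)
    have hB : MeasurableSet {ω | Δ ω i = -1} := (hΔmeas i) (measurableSet_singleton (-1))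
    have heq : (fun ω => Δ ω i) =ᵐ[P]
        fun ω => Set.indicator {ω | Δ ω i = 1} (fun _ => (1:ℝ)) ω
          - Set.indicator {ω | Δ ω i = -1} (fun _ => (1:ℝ)) ω := by
      filter_upwards [hae] with ω hω
      rcases hω i with h | h
      · have h2 : ω ∉ {ω | Δ ω i = -1} := by
          simp only [Set.mem_setOf_eq, h]; norm_num
        simp [Set.indicator_of_mem (show ω ∈ {ω | Δ ω i = 1} from h),
          Set.indicator_of_notMem h2, h]
      · have h2 : ω ∉ {ω | Δ ω i = 1} := by
          simp only [Set.mem_setOf_eq, h]; norm_num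
        simp [Set.indicator_of_mem (show ω ∈ {ω | Δ ω i = -1} from h),
          Set.indicator_of_notMem h2, h]
    rw [integral_congr_ae heq, integral_sub, integral_indicator_const _ hA,
      integral_indicator_const _ hB, measureReal_def, measureReal_def, hΔplus i, hΔminus i]
    · simp
    · exact (integrable_const (1:ℝ)).indicator hA
    · exact (integrable_const (1:ℝ)).indicator hB
  -- integral of Δ i * Δ j
  have hcov : ∀ i, (∫ ω, Δ ω i * Δ ω j ∂P) = if i = j then 1 else 0 := by
    intro i
    by_cases hij : i = j
    · subst hij
      simp only [if_true]
      have heq : (fun ω => Δ ω i * Δ ω i) =ᵐ[P] fun _ => (1:ℝ) := by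
        filter_upwards [hae] with ω hω
        rcases hω i with h | h <;> simp [h]
      rw [integral_congr_ae heq]; simp
    · simp only [hij, if_false]
      have hind : IndepFun (fun ω => Δ ω i) (fun ω => Δ ω j) P :=
        hΔindep.indepFun hij
      have := hind.integral_mul_eq_mul_integral (hΔmeas i).aestronglyMeasurable (hΔmeas j).aestronglyMeasurable
      simpa [Pi.mul_apply, hexp i] using this
  -- integral of ψ
  have hψint_eq : (∫ ω, ψ ω ∂P) = g (Pi.single j 1) := by
    have heq : ψ = fun ω => ∑ i, g (Pi.single i 1) * (Δ ω i * Δ ω j) := by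
      funext ω
      rw [hψ]
      simp only
      rw [spsa_clm_apply_eq_sum g (Δ ω), Finset.sum_mul]
      congr 1; funext i; ring
    rw [heq, integral_finset_sum]
    · have : ∀ i, (∫ ω, g (Pi.single i 1) * (Δ ω i * Δ ω j) ∂P)
          = g (Pi.single i 1) * (if i = j then 1 else 0) := by
        intro i
        rw [integral_const_mul, hcov i]
      rw [Finset.sum_congr rfl (fun i _ => this i)]
      rw [Finset.sum_eq_single j]
      · simp
      · intro b _ hb; simp [hb]
      · intro h; exact absurd (Finset.mem_univ j) h
    · intro i _
      exact (hintmul i).const_mul _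
  refine ⟨M + 1, by linarith, 1, one_pos, fun c hc hc1 => ?_⟩
  set φ : Ω → ℝ := fun ω => (f (x + c • Δ ω) - f (x - c • Δ ω)) / (2 * c * Δ ω j) with hφ
  have hφmeas : Measurable φ := by
    apply Measurable.div
    · exact (hf.continuous.measurable.comp
        ((measurable_const.add (hΔmeas'.const_smul c)))).sub
        (hf.continuous.measurable.comp ((measurable_const.sub (hΔmeas'.const_smul c))))
    · exact (measurable_const.mul (hΔmeas j))
  -- pointwise bound a.e.
  have hkey : ∀ᵐ ω ∂P, |φ ω - ψ ω| ≤ M * c ^ 2 := by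
    filter_upwards [hae, hnorm] with ω hω h1
    have hT := spsa_taylor_sym hf hM x (c • Δ ω)
    have hnh : ‖c • Δ ω‖ = c := by
      rw [norm_smul, h1, Real.norm_eq_abs, abs_of_pos hc, mul_one]
    rw [hnh] at hT
    have hgs : fderiv ℝ f x (c • Δ ω) = c * g (Δ ω) := by
      rw [← hg]; simp
    rw [hgs] at hT
    have hne : (2 : ℝ) * c ≠ 0 := by positivity
    rcases hω j with h | h
    · have : φ ω - ψ ω
          = (f (x + c • Δ ω) - f (x - c • Δ ω) - 2 * (c * g (Δ ω))) / (2 * c) := by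
        rw [hφ, hψ]; simp only [h]
        field_simp
      rw [this, abs_div, abs_of_pos (by positivity : (0:ℝ) < 2 * c)]
      rw [div_le_iff₀ (by positivity)]
      calc |f (x + c • Δ ω) - f (x - c • Δ ω) - 2 * (c * g (Δ ω))| ≤ 2 * M * c ^ 3 := hT
        _ = M * c ^ 2 * (2 * c) := by ring
    · have : φ ω - ψ ω
          = -((f (x + c • Δ ω) - f (x - c • Δ ω) - 2 * (c * g (Δ ω))) / (2 * c)) := by
        rw [hφ, hψ]; simp only [h]
        field_simp
        ring
      rw [this, abs_neg, abs_div, abs_of_pos (by positivity : (0:ℝ) < 2 * c)]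
      rw [div_le_iff₀ (by positivity)]
      calc |f (x + c • Δ ω) - f (x - c • Δ ω) - 2 * (c * g (Δ ω))| ≤ 2 * M * c ^ 3 := hT
        _ = M * c ^ 2 * (2 * c) := by ring
  have hφψint : Integrable (fun ω => φ ω - ψ ω) P := by
    refine Integrable.mono' (integrable_const (M * c ^ 2))
      ((hφmeas.sub hψmeas).aestronglyMeasurable) ?_
    filter_upwards [hkey] with ω hω
    simpa [Real.norm_eq_abs] using hω
  have hφint : Integrable φ P := by
    have : φ = fun ω => (φ ω - ψ ω) + ψ ω := by funext ω; ring
    rw [this]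
    exact hφψint.add hψint
  have hsplit : (∫ ω, φ ω ∂P) - g (Pi.single j 1)
      = ∫ ω, φ ω - ψ ω ∂P := by
    rw [integral_sub hφint hψint, hψint_eq]
  have hgoal : (∫ ω, (f (x + c • Δ ω) - f (x - c • Δ ω)) / (2 * c * Δ ω j) ∂P)
      = ∫ ω, φ ω ∂P := rfl
  rw [hgoal, hsplit]
  have := norm_integral_le_of_norm_le_const (μ := P) (C := M * c ^ 2) (f := fun ω => φ ω - ψ ω) ?_
  · rw [Real.norm_eq_abs] at this
    calc |∫ ω, φ ω - ψ ω ∂P| ≤ M * c ^ 2 * (P Set.univ).toReal := this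
      _ = M * c ^ 2 := by simp
      _ ≤ (M + 1) * c ^ 2 := by nlinarith
  · filter_upwards [hkey] with ω hω
    simpa [Real.norm_eq_abs] using hω
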